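/- The ab-index of the poset P_n equals 2(a+b)^{n-1} − (a−b)^{n-1} in the ring of non-commutative polynomials in a and b. -/

import Mathlib

open Finset

section ChainDefs
variable {α : Type*} [PartialOrder α]

/-- `l` is a saturated (maximal) chain from `x` to `y`, given as a list. -/
def SatChain (x y : α) (l : List α) : Prop :=
  l.Chain' (· ⋖ ·) ∧ l.head? = some x ∧ l.getLast? = some y

/-- A chain is rising for `τ` (where `true` codes the letter 𝐚 and `false` codes 𝐛)
if every consecutive triple is mapped to 𝐚. -/
def RisingOn (τ : α → α → α → Bool) (l : List α) : Prop :=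
  ∀ (i : ℕ) (h : i + 2 < l.length),
    τ (l.get ⟨i, by omega⟩) (l.get ⟨i + 1, by omega⟩) (l.get ⟨i + 2, by omega⟩) = true

/-- A triple assignment: every non-trivial interval has a unique rising maximal chain. -/
def IsTripleAssignment (τ : α → α → α → Bool) : Prop :=
  ∀ x y : α, x < y → ∃! l : List α, SatChain x y l ∧ RisingOn τ l

/-- An `R`-labeling with label set `Λ` and relation `sim`: every non-trivial interval
has a unique maximal chain whose successive labels are related by `sim`. -/
def IsRLabeling {Λ : Type*} (sim : Λ → Λ → Prop) (lab : α → α → Λ) : Prop :=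
  ∀ x y : α, x < y → ∃! l : List α,
    SatChain x y l ∧ ∀ (i : ℕ) (h : i + 2 < l.length),
      sim (lab (l.get ⟨i, by omega⟩) (l.get ⟨i + 1, by omega⟩))
          (lab (l.get ⟨i + 1, by omega⟩) (l.get ⟨i + 2, by omega⟩))

/-- `y` is a breakpoint for `τ`: the value `τ x y z` does not depend on `x ⋖ y` and `y ⋖ z`. -/
def IsBreakpoint (τ : α → α → α → Bool) (y : α) : Prop :=
  ∃ v : Bool, ∀ x z : α, x ⋖ y → y ⋖ z → τ x y z = v

end ChainDefs

section FlagDefs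
variable {α : Type*} [PartialOrder α] [BoundedOrder α]

/-- `rk` is a rank function making the bounded poset graded. -/
def IsGraded (rk : α → ℕ) : Prop :=
  rk ⊥ = 0 ∧ ∀ x y : α, x ⋖ y → rk y = rk x + 1

/-- Flag `f`-vector entry: the number of chains `0̂ < x₁ < ⋯ < x_k < 1̂`
passing exactly through the ranks in `S`. -/
noncomputable def flagF (rk : α → ℕ) (S : Finset ℕ) : ℕ :=
  Nat.card {c : Finset α // IsChain (· ≤ ·) (↑c : Set α) ∧ c.image rk = S ∧
    c.card = S.card ∧ ∀ x ∈ c, ⊥ < x ∧ x < ⊤}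

/-- Flag `h`-vector entry: `h_S = ∑_{T ⊆ S} (-1)^{|S∖T|} f_T`. -/
noncomputable def flagH (rk : α → ℕ) (S : Finset ℕ) : ℤ :=
  ∑ T ∈ S.powerset, (-1) ^ (S.card - T.card) * (flagF rk T : ℤ)

/-- The descent set of a maximal chain `0̂ = x₀ ⋖ x₁ ⋖ ⋯ ⋖ x_n = 1̂` with respect to `τ`:
those `i` with `τ (x_{i-1}) (x_i) (x_{i+1}) = 𝐛`. -/
def descSet (τ : α → α → α → Bool) (l : List α) : Finset ℕ :=
  (Finset.Icc 1 (l.length - 2)).filter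
    (fun i => τ (l.getD (i - 1) ⊥) (l.getD i ⊥) (l.getD (i + 1) ⊥) = false)

end FlagDefs

/-- The butterfly poset `T_n`: one element at ranks `0` and `n` and two elements
(`side = true/false`) at each rank `1 ≤ i ≤ n-1`; any two elements of distinct
ranks are comparable. -/
structure Butt (n : ℕ) where
  rk : ℕ
  side : Bool
  hle : rk ≤ n
  hb : rk = 0 ∨ rk = n → side = false

theorem Butt.ext' {n : ℕ} {x y : Butt n} (h1 : x.rk = y.rk) (h2 : x.side = y.side) :
    x = y := by
  cases x; cases y; simp_all

instance {n : ℕ} : PartialOrder (Butt n) where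
  le x y := x = y ∨ x.rk < y.rk
  le_refl x := Or.inl rfl
  le_trans x y z hxy hyz := by
    rcases hxy with rfl | h
    · exact hyz
    · rcases hyz with rfl | h'
      · exact Or.inr h
      · exact Or.inr (h.trans h')
  le_antisymm x y hxy hyx := by
    rcases hxy with rfl | h
    · rfl
    · rcases hyx with rfl | h'
      · rfl
      · omega

instance {n : ℕ} : BoundedOrder (Butt n) where
  bot := ⟨0, false, Nat.zero_le n, fun _ => rfl⟩
  top := ⟨n, false, le_refl n, fun _ => rfl⟩
  bot_le x := by
    by_cases h : x.rk = 0
    · exact Or.inl (Butt.ext' h.symm (x.hb (Or.inl h)).symm)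
    · exact Or.inr (by simpa using Nat.pos_of_ne_zero h)
  le_top x := by
    by_cases h : x.rk = n
    · exact Or.inl (Butt.ext' h (x.hb (Or.inr h)))
    · exact Or.inr (lt_of_le_of_ne x.hle h)

/-- The poset `P_n`: two copies (`copy = true/false`) of the butterfly poset `T_n`
glued along their minimum and maximum elements. -/
structure Glue (n : ℕ) where
  rk : ℕ
  side : Bool
  copy : Bool
  hle : rk ≤ n
  hb : rk = 0 ∨ rk = n → side = false ∧ copy = false

theorem Glue.ext' {n : ℕ} {x y : Glue n} (h1 : x.rk = y.rk) (h2 : x.side = y.side)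
    (h3 : x.copy = y.copy) : x = y := by
  cases x; cases y; simp_all

instance {n : ℕ} : PartialOrder (Glue n) where
  le x y := x = y ∨ (x.rk < y.rk ∧ (x.copy = y.copy ∨ x.rk = 0 ∨ y.rk = n))
  le_refl x := Or.inl rfl
  le_trans x y z hxy hyz := by
    rcases hxy with rfl | ⟨h1, h2⟩
    · exact hyz
    · rcases hyz with rfl | ⟨h3, h4⟩
      · exact Or.inr ⟨h1, h2⟩
      · refine Or.inr ⟨h1.trans h3, ?_⟩
        rcases h2 with hc | h0 | hn
        · rcases h4 with hc' | h0' | hn'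
          · exact Or.inl (hc.trans hc')
          · omega
          · exact Or.inr (Or.inr hn')
        · exact Or.inr (Or.inl h0)
        · have := z.hle; omega
  le_antisymm x y hxy hyx := by
    rcases hxy with rfl | ⟨h1, _⟩
    · rfl
    · rcases hyx with rfl | ⟨h2, _⟩
      · rfl
      · omega

instance {n : ℕ} : BoundedOrder (Glue n) where
  bot := ⟨0, false, false, Nat.zero_le n, fun _ => ⟨rfl, rfl⟩⟩
  top := ⟨n, false, false, le_refl n, fun _ => ⟨rfl, rfl⟩⟩
  bot_le x := by
    by_cases h : x.rk = 0
    · exact Or.inl (Glue.ext' h.symm (x.hb (Or.inl h)).1.symm (x.hb (Or.inl h)).2.symm)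
    · exact Or.inr ⟨by simpa using Nat.pos_of_ne_zero h, Or.inr (Or.inl rfl)⟩
  le_top x := by
    by_cases h : x.rk = n
    · exact Or.inl (Glue.ext' h (x.hb (Or.inr h)).1 (x.hb (Or.inr h)).2)
    · exact Or.inr ⟨lt_of_le_of_ne x.hle h, Or.inr (Or.inr rfl)⟩

/-- Eulerian condition (counting form): every non-trivial interval has as many
elements of even rank as of odd rank. -/
def EulerianCount {α : Type*} [PartialOrder α] (rk : α → ℕ) : Prop :=
  ∀ x y : α, x < y →
    Nat.card {z : α // z ∈ Set.Icc x y ∧ Even (rk z - rk x)} =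
    Nat.card {z : α // z ∈ Set.Icc x y ∧ ¬ Even (rk z - rk x)}

section AbIndex

/-- The variable 𝐚 of the non-commutative polynomial ring `ℤ⟨𝐚,𝐛⟩`,
realized as the monoid algebra of the free monoid on two letters. -/
noncomputable def abA : MonoidAlgebra ℤ (FreeMonoid Bool) :=
  MonoidAlgebra.single (FreeMonoid.ofList [true]) 1

/-- The variable 𝐛. -/
noncomputable def abB : MonoidAlgebra ℤ (FreeMonoid Bool) :=
  MonoidAlgebra.single (FreeMonoid.ofList [false]) 1

/-- The 𝐚𝐛-monomial `u_S` of length `n-1`, with 𝐛 in the positions of `S`. -/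
def abMonomial (n : ℕ) (S : Finset ℕ) : FreeMonoid Bool :=
  FreeMonoid.ofList ((List.range (n - 1)).map (fun j => decide ((j + 1) ∉ S)))

/-- The 𝐚𝐛-index `Ψ(P) = ∑_S h_S u_S` of a bounded poset of rank `n`
with rank function `rk`. -/
noncomputable def abIndex {α : Type*} [PartialOrder α] [BoundedOrder α]
    (rk : α → ℕ) (n : ℕ) : MonoidAlgebra ℤ (FreeMonoid Bool) :=
  ∑ S ∈ (Finset.Icc 1 (n - 1)).powerset,
    MonoidAlgebra.single (abMonomial n S) (flagH rk S)

/-- The weight `wt(c)` of a maximal chain, as an 𝐚𝐛-monomial. -/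
def chainWeight {α : Type*} [PartialOrder α] [OrderBot α]
    (τ : α → α → α → Bool) (l : List α) : FreeMonoid Bool :=
  FreeMonoid.ofList ((List.range (l.length - 2)).map
    (fun i => τ (l.getD i ⊥) (l.getD (i + 1) ⊥) (l.getD (i + 2) ⊥)))

end AbIndex

/-!
A chain of `P_n` avoiding `0̂` and `1̂` lies in a single copy of `T_n`, because interior
elements of different copies are incomparable; with a nonempty rank set `S` it picks one of
two elements at each rank, so `f_S = 2 ^ (|S| + 1)`, while `f_∅ = 1`. Inclusion–exclusion then
gives `h_S = 2 (2 - 1) ^ |S| - (-1) ^ |S|`, and expanding `(𝐚 + c 𝐛) ^ (n - 1)` letter by letter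
gives `∑_S c ^ |S| u_S`.
-/

open Finset

lemma abMonomial_add_two (m : ℕ) (S : Finset ℕ) :
    abMonomial (m + 2) S = abMonomial (m + 1) S * FreeMonoid.of (decide (m + 1 ∉ S)) := by
  rw [abMonomial, abMonomial, show m + 2 - 1 = m + 1 from rfl, List.range_succ, List.map_append,
    FreeMonoid.ofList_append]
  rfl

lemma abMonomial_insert_of_le {n k : ℕ} (S : Finset ℕ) (h : n ≤ k) :
    abMonomial n (insert k S) = abMonomial n S := by
  unfold abMonomial
  congr 1
  refine List.map_congr_left fun j hj => ?_
  have := List.mem_range.mp hj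
  grind

lemma single_mul_abA_add_smul_abB (u : FreeMonoid Bool) (x c : ℤ) :
    MonoidAlgebra.single u x * (abA + c • abB) =
      MonoidAlgebra.single (u * FreeMonoid.of true) x +
        MonoidAlgebra.single (u * FreeMonoid.of false) (x * c) := by
  rw [abA, abB, MonoidAlgebra.smul_single', mul_one, mul_add, MonoidAlgebra.single_mul_single,
    MonoidAlgebra.single_mul_single, mul_one]
  rfl

lemma abA_add_smul_abB_pow (c : ℤ) (n : ℕ) :
    (abA + c • abB) ^ (n - 1) =
      ∑ S ∈ (Icc 1 (n - 1)).powerset, MonoidAlgebra.single (abMonomial n S) (c ^ #S) := by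
  obtain _ | m := n
  · simp [abMonomial, MonoidAlgebra.one_def]
  rw [Nat.add_sub_cancel]
  induction m with
  | zero => simp [abMonomial, MonoidAlgebra.one_def]
  | succ m ih =>
    have hm : m + 1 ∉ Icc 1 m := by simp
    rw [pow_succ, ih, ← insert_Icc_right_eq_Icc_add_one (by omega), sum_powerset_insert hm, sum_mul,
      ← sum_add_distrib]
    refine sum_congr rfl fun S hS => ?_
    have hS : m + 1 ∉ S := fun h => hm (mem_powerset.mp hS h)
    rw [single_mul_abA_add_smul_abB, abMonomial_add_two, abMonomial_add_two,
      abMonomial_insert_of_le _ le_rfl, card_insert_of_notMem hS, pow_succ]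
    simp [hS]

lemma sum_powerset_neg_one_pow_mul_two_pow {ι : Type*} (S : Finset ι) :
    ∑ T ∈ S.powerset, (-1 : ℤ) ^ (#S - #T) * 2 ^ #T = 1 := by
  simpa [mul_comm] using sum_pow_mul_eq_add_pow (2 : ℤ) (-1) S

section Flags
variable {α : Type*} [PartialOrder α] [BoundedOrder α]

def IsFlag (rk : α → ℕ) (S : Finset ℕ) (c : Finset α) : Prop :=
  IsChain (· ≤ ·) (c : Set α) ∧ c.image rk = S ∧ #c = #S ∧ ∀ x ∈ c, ⊥ < x ∧ x < ⊤

lemma flagF_eq_card_isFlag (rk : α → ℕ) (S : Finset ℕ) :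
    flagF rk S = Nat.card {c // IsFlag rk S c} := rfl

lemma flagF_empty (rk : α → ℕ) : flagF rk ∅ = 1 := by
  have hflag : ∀ c, IsFlag rk ∅ c ↔ c = ∅ := fun c =>
    ⟨fun h => card_eq_zero.mp h.2.2.1, by rintro rfl; simp [IsFlag]⟩
  rw [flagF_eq_card_isFlag, Nat.card_eq_one_iff_exists]
  exact ⟨⟨∅, (hflag ∅).2 rfl⟩, fun c => Subtype.ext ((hflag c).1 c.2)⟩

end Flags

namespace Glue
variable {n : ℕ}

instance : DecidableEq (Glue n) := fun x y =>
  decidable_of_iff (x.rk = y.rk ∧ x.side = y.side ∧ x.copy = y.copy)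
    ⟨fun h => ext' h.1 h.2.1 h.2.2, by rintro rfl; exact ⟨rfl, rfl, rfl⟩⟩

@[simp] lemma rk_bot : (⊥ : Glue n).rk = 0 := rfl

@[simp] lemma rk_top : (⊤ : Glue n).rk = n := rfl

lemma lt_iff {x y : Glue n} :
    x < y ↔ x.rk < y.rk ∧ (x.copy = y.copy ∨ x.rk = 0 ∨ y.rk = n) := by
  rw [lt_iff_le_and_ne]
  constructor
  · rintro ⟨rfl | h, hne⟩
    · exact absurd rfl hne
    · exact h
  · rintro h
    exact ⟨Or.inr h, by rintro rfl; exact lt_irrefl _ h.1⟩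

lemma copy_eq_of_lt {x y : Glue n} (h : x < y) (hx : ⊥ < x) (hy : y < ⊤) :
    x.copy = y.copy := by
  have hx0 : 0 < x.rk := (lt_iff.mp hx).1
  have hyn : y.rk < n := (lt_iff.mp hy).1
  obtain ⟨-, hc | h | h⟩ := lt_iff.mp h
  · exact hc
  · omega
  · omega

lemma copy_eq_of_isChain {c : Set (Glue n)} (hc : IsChain (· ≤ ·) c)
    (hint : ∀ x ∈ c, ⊥ < x ∧ x < ⊤) {x y : Glue n} (hx : x ∈ c) (hy : y ∈ c) :
    x.copy = y.copy := by
  rcases eq_or_ne x y with rfl | hne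
  · rfl
  rcases hc hx hy hne with h | h
  · exact copy_eq_of_lt (h.lt_of_ne hne) (hint x hx).1 (hint y hy).2
  · exact (copy_eq_of_lt (h.lt_of_ne hne.symm) (hint y hy).1 (hint x hx).2).symm

def ofRank (i : ℕ) (hi : i ∈ Icc 1 (n - 1)) (side copy : Bool) : Glue n :=
  ⟨i, side, copy, by grind, by grind⟩

lemma bot_lt_ofRank {i : ℕ} (hi : i ∈ Icc 1 (n - 1)) (side copy : Bool) :
    ⊥ < ofRank i hi side copy :=
  lt_iff.mpr ⟨by simp only [ofRank, rk_bot]; grind, Or.inr (Or.inl rfl)⟩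

lemma ofRank_lt_top {i : ℕ} (hi : i ∈ Icc 1 (n - 1)) (side copy : Bool) :
    ofRank i hi side copy < ⊤ :=
  lt_iff.mpr ⟨by simp only [ofRank, rk_top]; grind, Or.inr (Or.inr rfl)⟩

lemma ofRank_lt_ofRank {i j : ℕ} (hi : i ∈ Icc 1 (n - 1)) (hj : j ∈ Icc 1 (n - 1)) (hij : i < j)
    (side side' copy : Bool) : ofRank i hi side copy < ofRank j hj side' copy :=
  lt_iff.mpr ⟨hij, Or.inl rfl⟩

def flagOf (S : Finset ℕ) (hS : S ⊆ Icc 1 (n - 1)) (side : S → Bool) (copy : Bool) :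
    Finset (Glue n) :=
  S.attach.image fun i : S => ofRank i (hS i.2) (side i) copy

variable {S : Finset ℕ}

lemma ofRank_mem_flagOf_iff (hS : S ⊆ Icc 1 (n - 1)) (i : S) (side : S → Bool) (s copy c : Bool) :
    ofRank i (hS i.2) s c ∈ flagOf S hS side copy ↔ s = side i ∧ c = copy := by
  constructor
  · intro h
    obtain ⟨j, -, hj⟩ := mem_image.mp h
    obtain rfl : j = i := Subtype.ext (congrArg rk hj)
    exact ⟨(congrArg Glue.side hj).symm, (congrArg Glue.copy hj).symm⟩
  · rintro ⟨rfl, rfl⟩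
    exact mem_image_of_mem _ (mem_attach _ _)

lemma isFlag_flagOf (hS : S ⊆ Icc 1 (n - 1)) (side : S → Bool) (copy : Bool) : IsFlag rk S (flagOf S hS side copy) := by
  have hrk : Function.Injective fun i : S => (ofRank i (hS i.2) (side i) copy).rk :=
    Subtype.val_injective
  refine ⟨?_, ?_, ?_, ?_⟩
  · rintro _ hx _ hy hne
    obtain ⟨i, -, rfl⟩ := mem_image.mp hx
    obtain ⟨j, -, rfl⟩ := mem_image.mp hy
    have hij : (i : ℕ) ≠ j := fun h => hne (by rw [Subtype.ext h])
    rcases hij.lt_or_gt with h | h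
    · exact Or.inl (ofRank_lt_ofRank _ _ h _ _ _).le
    · exact Or.inr (ofRank_lt_ofRank _ _ h _ _ _).le
  · rw [flagOf, image_image]
    exact attach_image_val
  · rw [flagOf, card_image_of_injective _ hrk.of_comp, card_attach]
  · intro x hx
    obtain ⟨i, -, rfl⟩ := mem_image.mp hx
    exact ⟨bot_lt_ofRank _ _ _, ofRank_lt_top _ _ _⟩

lemma flagOf_injective (hS : S ⊆ Icc 1 (n - 1)) (hne : S.Nonempty) :
    Function.Injective fun p : (S → Bool) × Bool => flagOf S hS p.1 p.2 := by
  rintro ⟨side, copy⟩ ⟨side', copy'⟩ (h : flagOf S hS side copy = flagOf S hS side' copy')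
  have key : ∀ i : S, side i = side' i ∧ copy = copy' := fun i =>
    (ofRank_mem_flagOf_iff hS i side' _ _ _).mp
      (h ▸ (ofRank_mem_flagOf_iff hS i side _ _ _).mpr ⟨rfl, rfl⟩)
  exact Prod.ext (funext fun i => (key i).1) (key ⟨_, hne.choose_spec⟩).2

lemma exists_flagOf_eq (hS : S ⊆ Icc 1 (n - 1)) (hne : S.Nonempty) {c : Finset (Glue n)} (hc : IsFlag rk S c) :
    ∃ p : (S → Bool) × Bool, flagOf S hS p.1 p.2 = c := by
  obtain ⟨hchain, himage, hcard, hint⟩ := hc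
  have hex : ∀ i : S, ∃ x ∈ c, x.rk = i := fun i => mem_image.mp (himage ▸ i.2)
  choose x hxc hxrk using hex
  obtain ⟨i₀⟩ : Nonempty S := hne.to_subtype
  refine ⟨⟨fun i => (x i).side, (x i₀).copy⟩, ?_⟩
  have hx : ∀ i : S, ofRank i (hS i.2) (x i).side (x i₀).copy = x i := fun i =>
    ext' (hxrk i).symm rfl
      (copy_eq_of_isChain hchain hint (hxc i₀) (hxc i) : (x i₀).copy = (x i).copy)
  have hsub : flagOf S hS (fun i => (x i).side) (x i₀).copy ⊆ c := by
    intro y hy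
    obtain ⟨i, -, rfl⟩ := mem_image.mp hy
    exact hx i ▸ hxc i
  exact eq_of_subset_of_card_le hsub (by rw [hcard, (isFlag_flagOf hS _ _).2.2.1])

lemma flagF_eq_two_pow (hS : S ⊆ Icc 1 (n - 1)) (hne : S.Nonempty) : flagF (rk (n := n)) S = 2 ^ (#S + 1) := by
  let e : (S → Bool) × Bool → {c // IsFlag rk S c} := fun p =>
    ⟨flagOf S hS p.1 p.2, isFlag_flagOf hS p.1 p.2⟩
  have he : Function.Bijective e :=
    ⟨fun p q h => flagOf_injective hS hne (congrArg Subtype.val h),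
      fun c => (exists_flagOf_eq hS hne c.2).imp fun _ h => Subtype.ext h⟩
  rw [flagF_eq_card_isFlag, ← Nat.card_eq_of_bijective e he, Nat.card_eq_fintype_card,
    Fintype.card_prod, Fintype.card_fun, Fintype.card_coe, Fintype.card_bool, pow_succ]

lemma flagH_eq (hS : S ⊆ Icc 1 (n - 1)) : flagH (rk (n := n)) S = 2 - (-1) ^ #S := by
  have hf : ∀ T ∈ S.powerset, (-1) ^ (#S - #T) * (flagF (rk (n := n)) T : ℤ) =
      2 * ((-1) ^ (#S - #T) * 2 ^ #T) - if T = ∅ then (-1) ^ #S else 0 := by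
    intro T hT
    rcases T.eq_empty_or_nonempty with rfl | hT'
    · rw [flagF_empty, if_pos rfl, card_empty, Nat.sub_zero]
      push_cast
      ring
    · rw [flagF_eq_two_pow ((mem_powerset.mp hT).trans hS) hT', if_neg hT'.ne_empty]
      push_cast
      ring
  rw [flagH, sum_congr rfl hf, sum_sub_distrib, ← mul_sum, sum_powerset_neg_one_pow_mul_two_pow,
    sum_ite_eq' _ ∅, if_pos (empty_mem_powerset S)]
  ring

end Glue

/-- The 𝐚𝐛-index of the poset `P_n` equals `2(𝐚+𝐛)^{n-1} − (𝐚−𝐛)^{n-1}`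
in the non-commutative polynomial ring in `𝐚` and `𝐛`. -/
theorem glue_abIndex (n : ℕ) :
    abIndex (Glue.rk (n := n)) n = 2 * (abA + abB) ^ (n - 1) - (abA - abB) ^ (n - 1) := by
  have hplus : abA + abB = abA + (1 : ℤ) • abB := by rw [one_smul]
  have hminus : abA - abB = abA + (-1 : ℤ) • abB := by rw [neg_one_smul, sub_eq_add_neg]
  rw [hplus, hminus, abA_add_smul_abB_pow, abA_add_smul_abB_pow, abIndex, mul_sum,
    ← sum_sub_distrib]
  refine sum_congr rfl fun S hS => ?_
  rw [Glue.flagH_eq (mem_powerset.mp hS), one_pow, MonoidAlgebra.single_sub,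
    two_mul, ← MonoidAlgebra.single_add, one_add_one_eq_two]
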